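/- arXiv:2004.02528 — 3 statements merged into one kernel-verified Lean document; each statement's English description precedes it below -/
import Mathlib

section
/- Let ψ : ℝⁿ → ℝ be a C² function whose entire graph in ℝ^{n+1}_1 is space-like or time-like (|∇ψ| ≠ 1 everywhere) and has constant mean curvature H. If there exist constants M > 0 and ε > 0 such that |∇ψ|/√(|1-|∇ψ|²|) ≤ M·(|u|²)^{1/2 - ε} on ℝⁿ, then H = 0. -/
/-!
The field `X = ∇ψ / √|1 - |∇ψ|²|` has constant divergence `nH`. The divergence theorem on the
cube `[-R, R]ⁿ` equates `(2R)ⁿ · nH` with the flux of `X` through the `2n` faces, each of area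
`(2R)ⁿ⁻¹`; on the faces `R ≤ |u| ≤ √n R`, so the growth bound makes `|X| ≤ M √n R^(1-2ε)` there.
Hence `|H| ≤ M √n R^(-2ε)` for every `R > 0`, and `R → ∞` gives `H = 0`.
-/

open MeasureTheory Metric
open scoped ENNReal

/-- Divergence of a vector field on Euclidean space: trace of the total derivative. -/
noncomputable def vdiv {n : ℕ} (X : EuclideanSpace ℝ (Fin n) → EuclideanSpace ℝ (Fin n))
    (u : EuclideanSpace ℝ (Fin n)) : ℝ :=
  LinearMap.trace ℝ (EuclideanSpace ℝ (Fin n)) (fderiv ℝ X u).toLinearMap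

open Set Filter

theorem volume_real_cube (k : ℕ) {R : ℝ} (hR : 0 ≤ R) :
    volume.real (Icc (fun _ : Fin k => -R) fun _ => R) = (2 * R) ^ k := by
  rw [measureReal_def, Real.volume_Icc_pi_toReal fun _ => by linarith]
  simp [two_mul]

theorem abs_setIntegral_cube_le {k : ℕ} {f : (Fin k → ℝ) → ℝ} {R K : ℝ} (hR : 0 ≤ R)
    (hf : ∀ x ∈ Icc (fun _ : Fin k => -R) (fun _ => R), |f x| ≤ K) :
    |∫ x in Icc (fun _ : Fin k => -R) (fun _ => R), f x| ≤ K * (2 * R) ^ k := by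
  have := norm_setIntegral_le_of_norm_le_const (μ := volume) (f := f) isCompact_Icc.measure_lt_top
    (by simpa only [Real.norm_eq_abs] using hf)
  rwa [Real.norm_eq_abs, volume_real_cube k hR] at this

theorem abs_insertNth_le {m : ℕ} {R c : ℝ} (hc : |c| = R) (i : Fin (m + 1))
    {x : Fin m → ℝ} (hx : x ∈ Icc (fun _ => -R) fun _ => R) (j : Fin (m + 1)) :
    |(i.insertNth c x : Fin (m + 1) → ℝ) j| ≤ R := by
  rcases eq_or_ne j i with rfl | hji
  · simp [hc]
  · obtain ⟨k, rfl⟩ := Fin.exists_succAbove_eq hji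
    simpa [abs_le] using And.intro (hx.1 k) (hx.2 k)

theorem mul_abs_le_of_divergence_eq_const {m : ℕ} {Y : (Fin (m + 1) → ℝ) → Fin (m + 1) → ℝ}
    {Y' : (Fin (m + 1) → ℝ) → (Fin (m + 1) → ℝ) →L[ℝ] Fin (m + 1) → ℝ} {c R K : ℝ} (hR : 0 < R)
    (hY : ∀ x, HasFDerivAt Y (Y' x) x) (hdiv : ∀ x, ∑ i, Y' x (Pi.single i 1) i = c)
    (hface : ∀ x, (∀ j, |x j| ≤ R) → ∀ i, |x i| = R → |Y x i| ≤ K) :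
    R * |c| ≤ (m + 1) * K := by
  have hle : (fun _ => -R : Fin (m + 1) → ℝ) ≤ fun _ => R := fun _ => neg_le_self hR.le
  have hflux := integral_divergence_of_hasFDerivAt_off_countable _ _ hle Y Y' ∅ countable_empty
    (fun x _ => (hY x).continuousAt.continuousWithinAt) (fun x _ => hY x)
    (by simp_rw [hdiv]; exact integrableOn_const isCompact_Icc.measure_lt_top.ne)
  simp_rw [hdiv, setIntegral_const, volume_real_cube _ hR.le, smul_eq_mul, Function.comp_def]
    at hflux
  have hface_integral : ∀ (i : Fin (m + 1)) (s : ℝ), |s| = R →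
      |∫ x in Icc (fun _ : Fin m => -R) (fun _ => R), Y (i.insertNth s x) i| ≤ K * (2 * R) ^ m :=
    fun i s hs => abs_setIntegral_cube_le hR.le fun x hx =>
      hface _ (abs_insertNth_le hs i hx) i (by rwa [Fin.insertNth_apply_same])
  have hsum : (2 * R) ^ (m + 1) * |c| ≤ (m + 1) * (2 * (K * (2 * R) ^ m)) := by
    rw [← abs_of_pos (by positivity : (0 : ℝ) < (2 * R) ^ (m + 1)), ← abs_mul, hflux]
    refine (Finset.abs_sum_le_sum_abs _ _).trans ?_
    refine (Finset.sum_le_card_nsmul _ _ (2 * (K * (2 * R) ^ m)) fun i _ => ?_).trans_eq (by simp)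
    refine (abs_sub _ _).trans ?_
    linarith [hface_integral i R (abs_of_pos hR), hface_integral i (-R) (by simp [abs_of_pos hR])]
  refine le_of_mul_le_mul_left ?_ (by positivity : (0 : ℝ) < 2 * (2 * R) ^ m)
  linear_combination hsum

theorem vdiv_eq_sum {n : ℕ} (X : EuclideanSpace ℝ (Fin n) → EuclideanSpace ℝ (Fin n))
    (u : EuclideanSpace ℝ (Fin n)) :
    vdiv X u = ∑ i, fderiv ℝ X u (EuclideanSpace.single i 1) i := by
  rw [vdiv, LinearMap.trace_eq_matrix_trace ℝ (EuclideanSpace.basisFun (Fin n) ℝ).toBasis,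
    Matrix.trace]
  refine Finset.sum_congr rfl fun i _ => ?_
  simp [LinearMap.toMatrix_apply]

theorem norm_le_sqrt_mul_of_forall_abs_le {n : ℕ} {u : EuclideanSpace ℝ (Fin n)} {R : ℝ}
    (hR : 0 ≤ R) (hu : ∀ j, |u j| ≤ R) : ‖u‖ ≤ √n * R := by
  calc ‖u‖ = √(∑ j, u j ^ 2) := by simp [EuclideanSpace.norm_eq]
    _ ≤ √(∑ _j : Fin n, R ^ 2) :=
      Real.sqrt_le_sqrt <| Finset.sum_le_sum fun j _ =>
        sq_le_sq' (abs_le.1 (hu j)).1 (abs_le.1 (hu j)).2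
    _ = √n * R := by simp [Real.sqrt_mul, Real.sqrt_sq hR]

theorem mul_abs_le_of_vdiv_eq_const {m : ℕ}
    {X : EuclideanSpace ℝ (Fin (m + 1)) → EuclideanSpace ℝ (Fin (m + 1))} {c R K : ℝ}
    (hR : 0 < R) (hX : Differentiable ℝ X) (hdiv : ∀ u, vdiv X u = c)
    (hface : ∀ u : EuclideanSpace ℝ (Fin (m + 1)), (∀ j, |u j| ≤ R) → (∃ i, |u i| = R) →
      ‖X u‖ ≤ K) :
    R * |c| ≤ (m + 1) * K := by
  let σ := EuclideanSpace.equiv (Fin (m + 1)) ℝ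
  refine mul_abs_le_of_divergence_eq_const (Y := σ ∘ X ∘ σ.symm)
    (Y' := fun x => (σ : _ →L[ℝ] _).comp ((fderiv ℝ X (σ.symm x)).comp (σ.symm : _ →L[ℝ] _))) hR
    (fun x => σ.hasFDerivAt.comp x ((hX _).hasFDerivAt.comp x σ.symm.hasFDerivAt))
    (fun x => ?_) (fun x hx i hi => ?_)
  · rw [← hdiv (σ.symm x), vdiv_eq_sum]
    rfl
  · exact (PiLp.norm_apply_le (X (σ.symm x)) i).trans (hface _ hx ⟨i, hi⟩)

theorem rpow_le_mul_rpow_of_le_of_le {R t L s : ℝ} (hR : 0 < R) (hRt : R ≤ t) (htL : t ≤ L * R)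
    (hL : 1 ≤ L) (hs : s ≤ 1) : t ^ s ≤ L * R ^ s := by
  rcases le_total 0 s with hs0 | hs0
  · calc t ^ s ≤ (L * R) ^ s := Real.rpow_le_rpow (by linarith) htL hs0
      _ = L ^ s * R ^ s := Real.mul_rpow (by linarith) hR.le
      _ ≤ L * R ^ s := by gcongr; exact Real.rpow_le_self_of_one_le hL hs
  · calc t ^ s ≤ R ^ s := Real.rpow_le_rpow_of_nonpos hR hRt hs0
      _ ≤ L * R ^ s := le_mul_of_one_le_left (by positivity) hL

theorem abs_le_of_vdiv_eq_const_of_norm_le_rpow {m : ℕ}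
    {X : EuclideanSpace ℝ (Fin (m + 1)) → EuclideanSpace ℝ (Fin (m + 1))} {c M s R : ℝ}
    (hX : Differentiable ℝ X) (hdiv : ∀ u, vdiv X u = c) (hM : 0 ≤ M) (hs : s ≤ 1)
    (hgrowth : ∀ u, ‖X u‖ ≤ M * ‖u‖ ^ s) (hR : 0 < R) :
    |c| ≤ (m + 1) * (M * √(m + 1)) * R ^ (s - 1) := by
  have hflux := mul_abs_le_of_vdiv_eq_const (K := M * (√(m + 1) * R ^ s)) hR hX hdiv
    fun u hu ⟨i, hi⟩ => by
      have hRu : R ≤ ‖u‖ := hi ▸ PiLp.norm_apply_le u i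
      have huR : ‖u‖ ≤ √(m + 1) * R := by
        simpa using norm_le_sqrt_mul_of_forall_abs_le hR.le hu
      have hL : 1 ≤ √((m : ℝ) + 1) := Real.one_le_sqrt.2 (by linarith [m.cast_nonneg (α := ℝ)])
      exact (hgrowth u).trans
        (mul_le_mul_of_nonneg_left (rpow_le_mul_rpow_of_le_of_le hR hRu huR hL hs) hM)
  rw [Real.rpow_sub_one hR.ne', ← mul_div_assoc, le_div_iff₀ hR]
  linarith

theorem eq_zero_of_vdiv_eq_const_of_norm_le_rpow {n : ℕ}
    {X : EuclideanSpace ℝ (Fin n) → EuclideanSpace ℝ (Fin n)} {c M s : ℝ}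
    (hX : Differentiable ℝ X) (hdiv : ∀ u, vdiv X u = c) (hM : 0 ≤ M) (hs : s < 1)
    (hgrowth : ∀ u, ‖X u‖ ≤ M * ‖u‖ ^ s) : c = 0 := by
  cases n with
  | zero => simpa [vdiv_eq_sum] using (hdiv 0).symm
  | succ m =>
    have hlim : Tendsto (fun R : ℝ => (m + 1) * (M * √(m + 1)) * R ^ (s - 1)) atTop (nhds 0) := by
      simpa [neg_sub] using
        (tendsto_rpow_neg_atTop (sub_pos.2 hs)).const_mul ((m + 1) * (M * √(m + 1)))
    exact abs_nonpos_iff.1 <| ge_of_tendsto hlim <| (eventually_gt_atTop 0).mono fun R hR =>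
      abs_le_of_vdiv_eq_const_of_norm_le_rpow hX hdiv hM hs.le hgrowth hR

theorem ContDiff.differentiable_gradient {E : Type*} [NormedAddCommGroup E]
    [InnerProductSpace ℝ E] [CompleteSpace E] {f : E → ℝ} {k : WithTop ℕ∞} (hf : ContDiff ℝ k f)
    (hk : 2 ≤ k) : Differentiable ℝ (gradient f) :=
  ((InnerProductSpace.toDual ℝ E).symm.contDiff.comp
    (hf.fderiv_right (m := 1) hk)).differentiable one_ne_zero

theorem Differentiable.inv_sqrt_abs_one_sub_norm_sq_smul {E F : Type*} [NormedAddCommGroup E]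
    [NormedSpace ℝ E] [NormedAddCommGroup F] [InnerProductSpace ℝ F] {g : E → F}
    (hg : Differentiable ℝ g) (hg1 : ∀ x, ‖g x‖ ≠ 1) :
    Differentiable ℝ fun x => (√|1 - ‖g x‖ ^ 2|)⁻¹ • g x := by
  intro x
  have hne : 1 - ‖g x‖ ^ 2 ≠ 0 := fun h =>
    hg1 x ((pow_eq_one_iff_of_nonneg (norm_nonneg _) two_ne_zero).1 (by linarith))
  have hq : DifferentiableAt ℝ (fun x => |1 - ‖g x‖ ^ 2|) x :=
    ((differentiableAt_const 1).sub ((hg x).norm_sq ℝ)).abs hne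
  exact ((hq.sqrt (abs_ne_zero.2 hne)).inv (Real.sqrt_pos.2 (abs_pos.2 hne)).ne').smul (hg x)

/-- Unified vanishing theorem of mean curvature for entire space-like or time-like CMC
graphs with a gradient growth bound (Corollary 2.4). -/
theorem cmc_vanishing (n : ℕ) (hn : 0 < n) (M ε H : ℝ) (hM : 0 < M) (hε : 0 < ε)
    (ψ : EuclideanSpace ℝ (Fin n) → ℝ) (hψ : ContDiff ℝ 2 ψ)
    (hcausal : ∀ u, ‖gradient ψ u‖ ≠ 1)
    (hgrad : ∀ u : EuclideanSpace ℝ (Fin n),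
      ‖gradient ψ u‖ / Real.sqrt |1 - ‖gradient ψ u‖ ^ 2| ≤ M * (‖u‖ ^ 2) ^ ((1 : ℝ) / 2 - ε))
    (hmean : ∀ u, (n : ℝ) * H =
      vdiv (fun v => (Real.sqrt |1 - ‖gradient ψ v‖ ^ 2|)⁻¹ • gradient ψ v) u) :
    H = 0 := by
  have hX := (hψ.differentiable_gradient le_rfl).inv_sqrt_abs_one_sub_norm_sq_smul hcausal
  have hgrowth : ∀ u, ‖(√|1 - ‖gradient ψ u‖ ^ 2|)⁻¹ • gradient ψ u‖ ≤ M * ‖u‖ ^ (1 - 2 * ε) := by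
    intro u
    rw [norm_smul, norm_inv, Real.norm_of_nonneg (Real.sqrt_nonneg _), inv_mul_eq_div,
      show 1 - 2 * ε = (2 : ℕ) * (1 / 2 - ε) by push_cast; ring,
      Real.rpow_natCast_mul (norm_nonneg u)]
    exact hgrad u
  have hnH := eq_zero_of_vdiv_eq_const_of_norm_le_rpow hX (fun u => (hmean u).symm) hM.le
    (by linarith) hgrowth
  exact (mul_eq_zero.1 hnH).resolve_left (Nat.cast_ne_zero.2 hn.ne')
end

section
/- Let ψ : ℝⁿ → ℝ be a C² function with |∇ψ| < 1 everywhere whose graph has constant mean curvature H in ℝ^{n+1}_1. If sinh θ = |∇ψ|/√(1-|∇ψ|²) is bounded on ℝⁿ, then H = 0 (hence, by the Calabi–Bernstein theorem, the graph is a space-like hyperplane). -/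
open MeasureTheory Metric
open scoped ENNReal

/-!
The field `X = ∇ψ / √(1 - |∇ψ|²)` has constant divergence `nH` and `|X| = sinh θ ≤ B`.
By the divergence theorem on the cube `[-R, R]ⁿ`, `nH (2R)ⁿ` is the flux of `X` through its
boundary, at most `2nB (2R)ⁿ⁻¹`. Hence `|nH| R ≤ nB` for every `R > 0`, which forces `H = 0`.
-/

open Set

theorem LinearMap.trace_pi_eq_sum {R ι : Type*} [CommRing R] [Fintype ι] [DecidableEq ι]
    (f : (ι → R) →ₗ[R] (ι → R)) : LinearMap.trace R (ι → R) f = ∑ i, f (Pi.single i 1) i := by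
  rw [LinearMap.trace_eq_matrix_trace R (Pi.basisFun R ι), Matrix.trace]
  simp

theorem volume_Icc_neg_const_toReal (n : ℕ) {R : ℝ} (hR : 0 ≤ R) :
    (volume (Icc (fun _ : Fin n => -R) fun _ => R)).toReal = (2 * R) ^ n := by
  rw [Real.volume_Icc_pi_toReal fun _ => by simp only; linarith]
  simp only [Finset.prod_const, Finset.card_univ, Fintype.card_fin]
  ring

theorem norm_setIntegral_Icc_neg_const_le {n : ℕ} {f : (Fin n → ℝ) → ℝ} {B R : ℝ} (hR : 0 ≤ R)
    (hf : ∀ x, ‖f x‖ ≤ B) :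
    ‖∫ x in Icc (fun _ => -R) (fun _ => R), f x‖ ≤ B * (2 * R) ^ n := by
  rw [← volume_Icc_neg_const_toReal n hR]
  exact norm_setIntegral_le_of_norm_le_const isCompact_Icc.measure_lt_top fun x _ => hf x

section Cube

variable {n : ℕ} {Y : (Fin (n + 1) → ℝ) → Fin (n + 1) → ℝ}
  {D : (Fin (n + 1) → ℝ) → (Fin (n + 1) → ℝ) →L[ℝ] Fin (n + 1) → ℝ} {c B : ℝ}

theorem abs_mul_le_of_trace_eq_of_norm_le (hY : ∀ x, HasFDerivAt Y (D x) x)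
    (hdiv : ∀ x, LinearMap.trace ℝ _ (D x).toLinearMap = c) (hB : ∀ x, ‖Y x‖ ≤ B)
    {R : ℝ} (hR : 0 < R) : |c| * R ≤ (n + 1) * B := by
  have hdiv' : ∀ x, ∑ i, D x (Pi.single i 1) i = c := fun x => by
    rw [← hdiv, LinearMap.trace_pi_eq_sum]; rfl
  have hcont : Continuous Y := continuous_iff_continuousAt.2 fun x => (hY x).continuousAt
  have hface : ∀ i t, ‖∫ x in Icc (fun _ : Fin n => -R) (fun _ => R), Y (i.insertNth t x) i‖
      ≤ B * (2 * R) ^ n := fun i t =>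
    norm_setIntegral_Icc_neg_const_le hR.le fun x => (norm_le_pi_norm _ i).trans (hB _)
  have hgauss := integral_divergence_of_hasFDerivAt_off_countable (fun _ => -R) (fun _ => R)
    (fun _ => by simp only; linarith) Y D ∅ countable_empty hcont.continuousOn (fun x _ => hY x)
    (by simp only [hdiv']; exact integrableOn_const isCompact_Icc.measure_lt_top.ne)
  simp only [hdiv', setIntegral_const, smul_eq_mul, measureReal_def,
    volume_Icc_neg_const_toReal _ hR.le] at hgauss
  have hsum : |c| * (2 * R) ^ (n + 1) ≤ (n + 1) * (2 * B * (2 * R) ^ n) := by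
    calc |c| * (2 * R) ^ (n + 1) = ‖(2 * R) ^ (n + 1) * c‖ := by
          rw [Real.norm_eq_abs, abs_mul, abs_of_pos (by positivity : (0 : ℝ) < (2 * R) ^ (n + 1)),
            mul_comm]
      _ ≤ ∑ i : Fin (n + 1), 2 * B * (2 * R) ^ n := by
          rw [hgauss]
          refine (norm_sum_le _ _).trans (Finset.sum_le_sum fun i _ => ?_)
          exact (norm_sub_le_of_le (hface i R) (hface i (-R))).trans_eq (by ring)
      _ = (n + 1) * (2 * B * (2 * R) ^ n) := by simp
  have hpow : (0 : ℝ) < 2 * (2 * R) ^ n := by positivity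
  refine le_of_mul_le_mul_right ?_ hpow
  linear_combination hsum

theorem eq_zero_of_trace_eq_of_norm_le (hY : ∀ x, HasFDerivAt Y (D x) x)
    (hdiv : ∀ x, LinearMap.trace ℝ _ (D x).toLinearMap = c) (hB : ∀ x, ‖Y x‖ ≤ B) : c = 0 := by
  by_contra hc
  have hR : 0 < (|(n + 1) * B| + 1) / |c| := by positivity
  have := abs_mul_le_of_trace_eq_of_norm_le hY hdiv hB hR
  rw [mul_div_cancel₀ _ (abs_ne_zero.2 hc)] at this
  linarith [le_abs_self ((n + 1) * B)]

end Cube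

theorem eq_zero_of_vdiv_eq_of_norm_le {n : ℕ} (hn : 0 < n)
    {X : EuclideanSpace ℝ (Fin n) → EuclideanSpace ℝ (Fin n)} (hX : Differentiable ℝ X) {c B : ℝ}
    (hdiv : ∀ u, vdiv X u = c) (hB : ∀ u, ‖X u‖ ≤ B) : c = 0 := by
  obtain ⟨m, rfl⟩ := Nat.exists_eq_succ_of_ne_zero hn.ne'
  -- Transport to `Fin (m + 1) → ℝ`, where the divergence theorem lives: the derivative is
  -- conjugated (same trace) and the sup norm is at most the Euclidean one.
  let e := EuclideanSpace.equiv (Fin (m + 1)) ℝ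
  refine eq_zero_of_trace_eq_of_norm_le (Y := e ∘ X ∘ e.symm)
    (D := fun x => (e : _ →L[ℝ] _).comp ((fderiv ℝ X (e.symm x)).comp (e.symm : _ →L[ℝ] _)))
    (fun x => e.hasFDerivAt.comp x ((hX _).hasFDerivAt.comp x e.symm.hasFDerivAt))
    (fun x => ?_) (fun x => ?_) (B := B)
  · rw [← hdiv (e.symm x), vdiv, ← LinearMap.trace_conj' _ e.toLinearEquiv]
    rfl
  · exact ((pi_norm_le_iff_of_nonneg (norm_nonneg _)).2 fun i => PiLp.norm_apply_le _ i).trans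
      (hB _)

theorem ContDiff.contDiff_gradient {F : Type*} [NormedAddCommGroup F] [InnerProductSpace ℝ F]
    [CompleteSpace F] {f : F → ℝ} {k m : WithTop ℕ∞} (hf : ContDiff ℝ k f) (hmk : m + 1 ≤ k) :
    ContDiff ℝ m (gradient f) :=
  (InnerProductSpace.toDual ℝ F).symm.contDiff.comp (hf.fderiv_right hmk)

theorem norm_inv_sqrt_one_sub_norm_sq_smul {F : Type*} [NormedAddCommGroup F] [NormedSpace ℝ F]
    (v : F) : ‖(√(1 - ‖v‖ ^ 2))⁻¹ • v‖ = ‖v‖ / √(1 - ‖v‖ ^ 2) := by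
  rw [norm_smul, norm_inv, Real.norm_of_nonneg (Real.sqrt_nonneg _), inv_mul_eq_div]

theorem Differentiable.inv_sqrt_one_sub_norm_sq_smul {E F : Type*} [NormedAddCommGroup E]
    [NormedSpace ℝ E] [NormedAddCommGroup F] [InnerProductSpace ℝ F] {g : E → F}
    (hg : Differentiable ℝ g) (hg1 : ∀ u, ‖g u‖ < 1) :
    Differentiable ℝ fun u => (√(1 - ‖g u‖ ^ 2))⁻¹ • g u := fun u => by
  have hpos : 0 < 1 - ‖g u‖ ^ 2 := by
    nlinarith [hg1 u, norm_nonneg (g u)]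
  exact ((((differentiableAt_const _).sub ((hg u).norm_sq ℝ)).sqrt hpos.ne').inv
    (Real.sqrt_pos.2 hpos).ne').smul (hg u)

/-- Liouville-type result: an entire space-like CMC graph with bounded
sinh θ = |∇ψ|/√(1-|∇ψ|²) has vanishing mean curvature (Corollary 3.3). -/
theorem cmc_vanishing_bounded_angle (n : ℕ) (hn : 0 < n) (H : ℝ)
    (ψ : EuclideanSpace ℝ (Fin n) → ℝ) (hψ : ContDiff ℝ 2 ψ)
    (hsp : ∀ u, ‖gradient ψ u‖ < 1)
    (hmean : ∀ u, (n : ℝ) * H =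
      vdiv (fun v => (Real.sqrt (1 - ‖gradient ψ v‖ ^ 2))⁻¹ • gradient ψ v) u)
    (hbdd : ∃ B : ℝ, ∀ u : EuclideanSpace ℝ (Fin n),
      ‖gradient ψ u‖ / Real.sqrt (1 - ‖gradient ψ u‖ ^ 2) ≤ B) :
    H = 0 := by
  obtain ⟨B, hB⟩ := hbdd
  have hgrad := (hψ.contDiff_gradient le_rfl).differentiable one_ne_zero
  have hX := hgrad.inv_sqrt_one_sub_norm_sq_smul hsp
  have hnH := eq_zero_of_vdiv_eq_of_norm_le hn hX (fun u => (hmean u).symm)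
    fun u => (norm_inv_sqrt_one_sub_norm_sq_smul _).trans_le (hB u)
  exact (mul_eq_zero.1 hnH).resolve_left (Nat.cast_ne_zero.2 hn.ne')
end

section
/- Let ψ : B²(R) → ℝ be a C² function on the open disk of radius R in ℝ² whose graph in Euclidean ℝ³ has mean curvature H given by 2H = div(∇ψ/√(1+|∇ψ|²)). If |H| ≥ α > 0 on B²(R), then R ≤ 1/α. -/
open MeasureTheory Metric
open scoped ENNReal

/-!
The vector field `X = ∇ψ / √(1 + |∇ψ|²)` satisfies `‖X‖ ≤ 1` and `div X = 2H`. Since `H` is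
continuous and `|H| ≥ α` on the connected disk, `H` has a constant sign, so after replacing `X` by
`-X` we may assume `div X ≥ 2α`. For `r < R`, the divergence theorem on the disk of radius `r`,
pulled back to the rectangle `[0, r] × [0, 2π]` by polar coordinates, gives
`2α · π r² ≤ ∫ div X = ∮ ⟪X, ν⟫ ≤ 2π r`, hence `r ≤ 1 / α`.
-/

open Real Set InnerProductSpace

section Divergence

variable {n : ℕ} {X : EuclideanSpace ℝ (Fin n) → EuclideanSpace ℝ (Fin n)}

theorem ContinuousOn.vdiv {s : Set (EuclideanSpace ℝ (Fin n))}
    (hX : ContinuousOn (fderiv ℝ X) s) : ContinuousOn (vdiv X) s :=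
  (LinearMap.continuous_of_finiteDimensional (LinearMap.trace ℝ (EuclideanSpace ℝ (Fin n)) ∘ₗ
    ContinuousLinearMap.coeLM (R := ℝ) ℝ)).comp_continuousOn hX

theorem vdiv_neg (u : EuclideanSpace ℝ (Fin n)) : vdiv (fun v => -X v) u = -vdiv X u := by
  simp [vdiv, fderiv_fun_neg]

end Divergence

theorem ContDiffOn.gradient {F : Type*} [NormedAddCommGroup F] [InnerProductSpace ℝ F]
    [CompleteSpace F] {ψ : F → ℝ} {s : Set F} {m n : WithTop ℕ∞} (hψ : ContDiffOn ℝ n ψ s)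
    (hs : IsOpen s) (hmn : m + 1 ≤ n) : ContDiffOn ℝ m (gradient ψ) s :=
  ((toDual ℝ F).symm.toIsometryEquiv.toRealLinearIsometryEquiv.contDiff.comp_contDiffOn
    (hψ.fderiv_of_isOpen hs hmn)).congr fun _ _ => by simp [_root_.gradient]

theorem norm_inv_sqrt_one_add_sq_smul_le_one {F : Type*} [NormedAddCommGroup F]
    [NormedSpace ℝ F] (v : F) : ‖(√(1 + ‖v‖ ^ 2))⁻¹ • v‖ ≤ 1 := by
  rw [norm_smul, norm_inv, norm_of_nonneg (sqrt_nonneg _), inv_mul_le_one₀ (by positivity)]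
  simpa using Real.abs_le_sqrt (by linarith : ‖v‖ ^ 2 ≤ 1 + ‖v‖ ^ 2)

theorem IsPreconnected.forall_le_or_forall_le_neg {α : Type*} [TopologicalSpace α] {s : Set α}
    (hs : IsPreconnected s) {f : α → ℝ} (hf : ContinuousOn f s) {a : ℝ} (ha : 0 < a)
    (hfa : ∀ x ∈ s, a ≤ |f x|) : (∀ x ∈ s, a ≤ f x) ∨ (∀ x ∈ s, f x ≤ -a) := by
  by_contra! ⟨⟨x, hx, hfx⟩, ⟨y, hy, hfy⟩⟩
  have hx' : f x ≤ -a := ((le_abs'.mp (hfa x hx)).resolve_right hfx.not_ge)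
  have hy' : a ≤ f y := ((le_abs'.mp (hfa y hy)).resolve_left hfy.not_ge)
  obtain ⟨z, hz, hfz⟩ : (0 : ℝ) ∈ f '' s := (hs.image f hf).ordConnected.out
    (mem_image_of_mem f hx) (mem_image_of_mem f hy) ⟨by linarith, by linarith⟩
  have := hfa z hz
  rw [hfz, abs_zero] at this
  linarith

local notation "E²" => EuclideanSpace ℝ (Fin 2)

noncomputable def radialVec (θ : ℝ) : E² :=
  cos θ • EuclideanSpace.single 0 1 + sin θ • EuclideanSpace.single 1 1

noncomputable def angularVec (θ : ℝ) : E² :=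
  -sin θ • EuclideanSpace.single 0 1 + cos θ • EuclideanSpace.single 1 1

theorem hasDerivAt_radialVec (θ : ℝ) : HasDerivAt radialVec (angularVec θ) θ :=
  ((hasDerivAt_cos θ).smul_const _).add ((hasDerivAt_sin θ).smul_const _)

theorem hasDerivAt_angularVec (θ : ℝ) : HasDerivAt angularVec (-radialVec θ) θ :=
  (((hasDerivAt_sin θ).neg.smul_const (EuclideanSpace.single (0 : Fin 2) (1 : ℝ))).add
    ((hasDerivAt_cos θ).smul_const (EuclideanSpace.single (1 : Fin 2) (1 : ℝ)))).congr_deriv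
    (by rw [radialVec, neg_add, neg_smul, neg_smul])

theorem differentiable_radialVec : Differentiable ℝ radialVec :=
  fun θ => (hasDerivAt_radialVec θ).differentiableAt

theorem differentiable_angularVec : Differentiable ℝ angularVec :=
  fun θ => (hasDerivAt_angularVec θ).differentiableAt

theorem norm_radialVec (θ : ℝ) : ‖radialVec θ‖ = 1 := by
  simp [radialVec, EuclideanSpace.norm_eq, Fin.sum_univ_two]

theorem radialVec_two_pi : radialVec (2 * π) = radialVec 0 := by
  simp [radialVec]

theorem angularVec_two_pi : angularVec (2 * π) = angularVec 0 := by
  simp [angularVec]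

theorem trace_eq_inner_radialVec_add_inner_angularVec (A : E² →L[ℝ] E²) (θ : ℝ) :
    LinearMap.trace ℝ E² A =
      ⟪radialVec θ, A (radialVec θ)⟫_ℝ + ⟪angularVec θ, A (angularVec θ)⟫_ℝ := by
  rw [LinearMap.trace_eq_sum_inner _ (EuclideanSpace.basisFun (Fin 2) ℝ)]
  simp only [radialVec, angularVec, Fin.sum_univ_two, EuclideanSpace.basisFun_apply,
    ContinuousLinearMap.coe_coe, map_add, map_smul, inner_add_left, inner_add_right,
    real_inner_smul_left, real_inner_smul_right]
  linear_combination
    -(⟪EuclideanSpace.single (0 : Fin 2) (1 : ℝ), A (EuclideanSpace.single 0 1)⟫_ℝ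
      + ⟪EuclideanSpace.single (1 : Fin 2) (1 : ℝ), A (EuclideanSpace.single 1 1)⟫_ℝ)
      * sin_sq_add_cos_sq θ

theorem fderiv_apply_one_zero_of_hasDerivAt {F : Type*} [NormedAddCommGroup F] [NormedSpace ℝ F]
    {f : ℝ × ℝ → F} {p : ℝ × ℝ} {f' : F} (hf : DifferentiableAt ℝ f p)
    (h : HasDerivAt (fun x => f (x, p.2)) f' p.1) : fderiv ℝ f p (1, 0) = f' :=
  (hf.hasFDerivAt.comp_hasDerivAt p.1 ((hasDerivAt_id p.1).prodMk (hasDerivAt_const _ _))).unique h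

theorem fderiv_apply_zero_one_of_hasDerivAt {F : Type*} [NormedAddCommGroup F] [NormedSpace ℝ F]
    {f : ℝ × ℝ → F} {p : ℝ × ℝ} {f' : F} (hf : DifferentiableAt ℝ f p)
    (h : HasDerivAt (fun y => f (p.1, y)) f' p.2) : fderiv ℝ f p (0, 1) = f' :=
  (hf.hasFDerivAt.comp_hasDerivAt p.2 ((hasDerivAt_const _ _).prodMk (hasDerivAt_id p.2))).unique h

noncomputable def fromPolar (p : ℝ × ℝ) : E² := p.1 • radialVec p.2

theorem norm_fromPolar (p : ℝ × ℝ) : ‖fromPolar p‖ = |p.1| := by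
  rw [fromPolar, norm_smul, norm_radialVec, mul_one, norm_eq_abs]

theorem differentiable_fromPolar : Differentiable ℝ fromPolar := by
  unfold fromPolar
  exact differentiable_fst.smul (differentiable_radialVec.comp
    (differentiable_snd : Differentiable ℝ (Prod.snd : ℝ × ℝ → ℝ)))

theorem mapsTo_fromPolar_Icc (r : ℝ) :
    MapsTo fromPolar (Icc (0, 0) (r, 2 * π)) (closedBall (0 : E²) r) := fun p hp => by
  rw [mem_closedBall_zero_iff, norm_fromPolar, abs_of_nonneg hp.1.1]
  exact hp.2.1

theorem setIntegral_fst_Icc_two_pi {r : ℝ} (hr : 0 ≤ r) :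
    ∫ p in Icc ((0 : ℝ), (0 : ℝ)) (r, 2 * π), p.1 = π * r ^ 2 := by
  have hprod : ∫ p in Icc ((0 : ℝ), (0 : ℝ)) (r, 2 * π), p.1 =
      (∫ x in Icc 0 r, x) * ∫ _ in Icc 0 (2 * π), (1 : ℝ) := by
    rw [← setIntegral_prod_mul, Icc_prod_Icc, Measure.volume_eq_prod]
    simp
  rw [hprod, integral_Icc_eq_integral_Ioc, ← intervalIntegral.integral_of_le hr, integral_id,
    setIntegral_const, Real.volume_real_Icc_of_le (by positivity), smul_eq_mul]
  ring

section PolarDivergence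

variable {Y : E² → E²}

noncomputable def radialComponent (Y : E² → E²) (p : ℝ × ℝ) : ℝ :=
  ⟪Y (fromPolar p), radialVec p.2⟫_ℝ

noncomputable def angularComponent (Y : E² → E²) (p : ℝ × ℝ) : ℝ :=
  ⟪Y (fromPolar p), angularVec p.2⟫_ℝ

theorem differentiableAt_mul_radialComponent {p : ℝ × ℝ}
    (hY : DifferentiableAt ℝ Y (fromPolar p)) :
    DifferentiableAt ℝ (fun q => q.1 * radialComponent Y q) p :=
  differentiableAt_fst.mul ((hY.comp p (differentiable_fromPolar p)).inner ℝ
    (differentiable_radialVec.comp differentiable_snd p))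

theorem differentiableAt_angularComponent {p : ℝ × ℝ}
    (hY : DifferentiableAt ℝ Y (fromPolar p)) : DifferentiableAt ℝ (angularComponent Y) p :=
  (hY.comp p (differentiable_fromPolar p)).inner ℝ
    (differentiable_angularVec.comp differentiable_snd p)

theorem hasDerivAt_mul_radialComponent {ρ θ : ℝ} (hY : DifferentiableAt ℝ Y (fromPolar (ρ, θ))) :
    HasDerivAt (fun x => x * radialComponent Y (x, θ))
      (radialComponent Y (ρ, θ)
        + ρ * ⟪radialVec θ, fderiv ℝ Y (fromPolar (ρ, θ)) (radialVec θ)⟫_ℝ) ρ := by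
  have hpolar : HasDerivAt (fun x => fromPolar (x, θ)) (radialVec θ) ρ :=
    ((hasDerivAt_id ρ).smul_const (radialVec θ)).congr_deriv (one_smul _ _)
  exact ((hasDerivAt_id' ρ).mul ((hY.hasFDerivAt.comp_hasDerivAt ρ hpolar).inner ℝ
    (hasDerivAt_const ρ (radialVec θ)))).congr_deriv
    (by simp [radialComponent, real_inner_comm (radialVec θ)])

theorem hasDerivAt_angularComponent {ρ θ : ℝ} (hY : DifferentiableAt ℝ Y (fromPolar (ρ, θ))) :
    HasDerivAt (fun y => angularComponent Y (ρ, y))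
      (ρ * ⟪angularVec θ, fderiv ℝ Y (fromPolar (ρ, θ)) (angularVec θ)⟫_ℝ
        - radialComponent Y (ρ, θ)) θ := by
  have hpolar : HasDerivAt (fun y => fromPolar (ρ, y)) (ρ • angularVec θ) θ :=
    (hasDerivAt_radialVec θ).const_smul ρ
  exact ((hY.hasFDerivAt.comp_hasDerivAt θ hpolar).inner ℝ (hasDerivAt_angularVec θ)).congr_deriv
    (by
      simp only [Function.comp_apply, inner_neg_right, map_smul, real_inner_comm (angularVec θ),
        real_inner_smul_right, radialComponent]
      ring)

theorem fderiv_mul_radialComponent_add_fderiv_angularComponent {p : ℝ × ℝ}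
    (hY : DifferentiableAt ℝ Y (fromPolar p)) :
    fderiv ℝ (fun q => q.1 * radialComponent Y q) p (1, 0)
      + fderiv ℝ (angularComponent Y) p (0, 1) = p.1 * vdiv Y (fromPolar p) := by
  obtain ⟨ρ, θ⟩ := p
  rw [fderiv_apply_one_zero_of_hasDerivAt (differentiableAt_mul_radialComponent hY)
      (hasDerivAt_mul_radialComponent hY),
    fderiv_apply_zero_one_of_hasDerivAt (differentiableAt_angularComponent hY)
      (hasDerivAt_angularComponent hY),
    vdiv, trace_eq_inner_radialVec_add_inner_angularVec _ θ]
  ring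

theorem integral_mul_vdiv_fromPolar {r : ℝ} (hr : 0 ≤ r)
    (hY : ∀ u ∈ closedBall (0 : E²) r, DifferentiableAt ℝ Y u)
    (hdiv : ContinuousOn (vdiv Y) (closedBall 0 r)) :
    ∫ p in Icc (0, 0) (r, 2 * π), p.1 * vdiv Y (fromPolar p) =
      ∫ θ in 0..2 * π, r * radialComponent Y (r, θ) := by
  have hmaps := mapsTo_fromPolar_Icc r
  have hYc : ContinuousOn (fun p => Y (fromPolar p)) (Icc (0, 0) (r, 2 * π)) :=
    (continuousOn_of_forall_continuousAt fun u hu => (hY u hu).continuousAt).comp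
      differentiable_fromPolar.continuous.continuousOn hmaps
  have hpolar : EqOn (fun p => fderiv ℝ (fun q => q.1 * radialComponent Y q) p (1, 0)
      + fderiv ℝ (angularComponent Y) p (0, 1)) (fun p => p.1 * vdiv Y (fromPolar p))
      (Icc (0, 0) (r, 2 * π)) := fun p hp =>
    fderiv_mul_radialComponent_add_fderiv_angularComponent (hY _ (hmaps hp))
  have hinterior : Ioo 0 r ×ˢ Ioo 0 (2 * π) \ ∅ ⊆ Icc (0, 0) (r, 2 * π) :=
    fun p ⟨⟨hρ, hθ⟩, _⟩ => ⟨⟨hρ.1.le, hθ.1.le⟩, ⟨hρ.2.le, hθ.2.le⟩⟩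
  have key := integral_divergence_prod_Icc_of_hasFDerivAt_off_countable_of_le
    (fun q => q.1 * radialComponent Y q) (angularComponent Y) _ _ (0, 0) (r, 2 * π)
    ⟨hr, by positivity⟩ ∅ countable_empty
    (continuousOn_fst.mul (hYc.inner (differentiable_radialVec.continuous.comp
      continuous_snd).continuousOn))
    (hYc.inner (differentiable_angularVec.continuous.comp continuous_snd).continuousOn)
    (fun p hp => (differentiableAt_mul_radialComponent (hY _ (hmaps (hinterior hp)))).hasFDerivAt)
    (fun p hp => (differentiableAt_angularComponent (hY _ (hmaps (hinterior hp)))).hasFDerivAt)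
    (((continuousOn_fst.mul (hdiv.comp differentiable_fromPolar.continuous.continuousOn hmaps)
      ).integrableOn_compact isCompact_Icc).congr_fun hpolar.symm measurableSet_Icc)
  have hperiodic (x : ℝ) : angularComponent Y (x, 2 * π) = angularComponent Y (x, 0) := by
    simp only [angularComponent, fromPolar, radialVec_two_pi, angularVec_two_pi]
  -- the edges `θ = 0` and `θ = 2π` cancel, and the edge `ρ = 0` carries the factor `ρ = 0`
  rw [← setIntegral_congr_fun measurableSet_Icc hpolar, key]
  simp [hperiodic]

theorem mul_le_two_mul_of_le_vdiv_of_norm_le {r c M : ℝ} (hr : 0 < r)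
    (hY : ∀ u ∈ closedBall (0 : E²) r, DifferentiableAt ℝ Y u)
    (hdiv : ContinuousOn (vdiv Y) (closedBall 0 r))
    (hM : ∀ u ∈ closedBall (0 : E²) r, ‖Y u‖ ≤ M)
    (hc : ∀ u ∈ closedBall (0 : E²) r, c ≤ vdiv Y u) :
    c * r ≤ 2 * M := by
  have hmaps := mapsTo_fromPolar_Icc r
  have hsphere (θ : ℝ) : fromPolar (r, θ) ∈ closedBall (0 : E²) r := by
    rw [mem_closedBall_zero_iff, norm_fromPolar, abs_of_pos hr]
  have harea : c * (π * r ^ 2) ≤ ∫ p in Icc (0, 0) (r, 2 * π), p.1 * vdiv Y (fromPolar p) := by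
    rw [← setIntegral_fst_Icc_two_pi hr.le, ← integral_const_mul]
    refine setIntegral_mono_on (continuous_const.mul continuous_fst).integrableOn_Icc
      ((continuousOn_fst.mul (hdiv.comp differentiable_fromPolar.continuous.continuousOn hmaps)
        ).integrableOn_compact isCompact_Icc) measurableSet_Icc fun p hp => ?_
    rw [mul_comm c]
    exact mul_le_mul_of_nonneg_left (hc _ (hmaps hp)) hp.1.1
  have hflux : ∫ θ in 0..2 * π, r * radialComponent Y (r, θ) ≤ ∫ _ in 0..2 * π, r * M := by
    have hYc : ContinuousOn Y (closedBall 0 r) :=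
      continuousOn_of_forall_continuousAt fun u hu => (hY u hu).continuousAt
    have hcont : Continuous fun θ => r * radialComponent Y (r, θ) :=
      continuous_const.mul ((hYc.comp_continuous (differentiable_fromPolar.continuous.comp
        (continuous_const.prodMk continuous_id)) hsphere).inner
        differentiable_radialVec.continuous)
    refine intervalIntegral.integral_mono_on (by positivity) (hcont.intervalIntegrable _ _)
      intervalIntegrable_const fun θ _ => mul_le_mul_of_nonneg_left ?_ hr.le
    calc radialComponent Y (r, θ) ≤ ‖Y (fromPolar (r, θ))‖ * ‖radialVec θ‖ :=
          real_inner_le_norm _ _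
      _ ≤ M := by rw [norm_radialVec, mul_one]; exact hM _ (hsphere θ)
  rw [integral_mul_vdiv_fromPolar hr.le hY hdiv] at harea
  rw [intervalIntegral.integral_const, smul_eq_mul] at hflux
  refine le_of_mul_le_mul_left ?_ (by positivity : 0 < π * r)
  nlinarith

theorem radius_le_two_mul_div_of_le_vdiv_of_norm_le {R c M : ℝ} (hR : 0 < R) (hc₀ : 0 < c)
    (hY : ContDiffOn ℝ 1 Y (ball 0 R)) (hM : ∀ u ∈ ball (0 : E²) R, ‖Y u‖ ≤ M)
    (hc : ∀ u ∈ ball (0 : E²) R, c ≤ vdiv Y u) :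
    R ≤ 2 * M / c := by
  by_contra! hMR
  obtain ⟨r, hr, hrR⟩ := exists_between (max_lt hMR hR)
  have hball : closedBall (0 : E²) r ⊆ ball 0 R := closedBall_subset_ball hrR
  have hr0 : 0 < r := (le_max_right _ _).trans_lt hr
  have := mul_le_two_mul_of_le_vdiv_of_norm_le hr0
    (fun u hu => (hY.differentiableOn one_ne_zero).differentiableAt
      (isOpen_ball.mem_nhds (hball hu)))
    ((hY.continuousOn_fderiv_of_isOpen isOpen_ball le_rfl).vdiv.mono hball)
    (fun u hu => hM u (hball hu)) (fun u hu => hc u (hball hu))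
  rw [← le_div_iff₀' hc₀] at this
  linarith [(le_max_left _ _).trans_lt hr]

end PolarDivergence

/-- Heinz's classical theorem: a graph over a disk of radius R in Euclidean ℝ³ with
|H| ≥ α > 0 satisfies R ≤ 1/α. -/
theorem heinz_euclidean (R α : ℝ) (hR : 0 < R) (hα : 0 < α)
    (ψ H : EuclideanSpace ℝ (Fin 2) → ℝ)
    (hψ : ContDiffOn ℝ 2 ψ (ball (0 : EuclideanSpace ℝ (Fin 2)) R))
    (hmean : ∀ u ∈ ball (0 : EuclideanSpace ℝ (Fin 2)) R,
      2 * H u =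
        vdiv (fun v => (Real.sqrt (1 + ‖gradient ψ v‖ ^ 2))⁻¹ • gradient ψ v) u)
    (hH : ∀ u ∈ ball (0 : EuclideanSpace ℝ (Fin 2)) R, α ≤ |H u|) :
    R ≤ 1 / α := by
  set X : E² → E² := fun v => (√(1 + ‖gradient ψ v‖ ^ 2))⁻¹ • gradient ψ v
  have hgrad : ContDiffOn ℝ 1 (gradient ψ) (ball 0 R) := hψ.gradient isOpen_ball le_rfl
  have hX : ContDiffOn ℝ 1 X (ball 0 R) :=
    (((contDiffOn_const.add (hgrad.norm_sq ℝ)).sqrt fun _ _ => by positivity).inv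
      fun _ _ => by positivity).smul hgrad
  have hHc : ContinuousOn H (ball 0 R) :=
    ((hX.continuousOn_fderiv_of_isOpen isOpen_ball le_rfl).vdiv.div_const 2).congr
      fun u hu => by linarith [hmean u hu]
  have h2α : 0 < 2 * α := by positivity
  rcases (convex_ball (0 : E²) R).isPreconnected.forall_le_or_forall_le_neg hHc hα hH
    with hpos | hneg
  · have := radius_le_two_mul_div_of_le_vdiv_of_norm_le hR h2α hX
      (fun v _ => norm_inv_sqrt_one_add_sq_smul_le_one _)
      (fun u hu => by linarith [hmean u hu, hpos u hu])
    rwa [mul_div_mul_left (1 : ℝ) α two_ne_zero] at this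
  · have := radius_le_two_mul_div_of_le_vdiv_of_norm_le (Y := fun v => -X v) hR h2α hX.neg
      (fun v _ => (norm_neg (X v)).trans_le (norm_inv_sqrt_one_add_sq_smul_le_one _))
      (fun u hu => by linarith [hmean u hu, hneg u hu, vdiv_neg (X := X) u])
    rwa [mul_div_mul_left (1 : ℝ) α two_ne_zero] at this
end
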